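/- (Theorem 1, part (a).) Fix an integer n ≥ 1, σ > 0, α, τ ∈ (0,1) satisfying (C1) τ ≥ α and (C2) τ < 2Φ(−z_{α/2}/2) − α, and λ > 0 with z_{α/2}σ/√n < √λ < (z_{α/2} + z_{τ/2})σ/√n. Let c_1 > 0 be a solution of θ = √λ − z_{α/2}σ̃(θ)/√n. Then for every θ ∈ [0, c_1], the difference Δ(θ) = CR(θ) − CR_1(θ) satisfies Δ(θ) ≥ 1 − α/τ; in particular Δ(θ) > 0 whenever τ > α. -/

import Mathlib

open MeasureTheory ProbabilityTheory

/-- The standard normal cumulative distribution function. -/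
noncomputable def Phi (x : ℝ) : ℝ := (gaussianReal 0 1 (Set.Iic x)).toReal

/-- P_s(θ,ν) = Φ(√n(θ − ν)/σ) + Φ(√n(−θ − ν)/σ). -/
noncomputable def Ps (n : ℕ) (σ θ ν : ℝ) : ℝ :=
  Phi (Real.sqrt n * (θ - ν) / σ) + Phi (Real.sqrt n * (-θ - ν) / σ)

/-- σ̃(θ) = (1 + λ/θ²)⁻¹ σ for θ ≠ 0, with the convention σ̃(0) = 0. -/
noncomputable def sigTilde (lam σ θ : ℝ) : ℝ :=
  if θ = 0 then 0 else (1 + lam / θ ^ 2)⁻¹ * σ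

open Classical in
/-- The piecewise function CR_a(θ,ν); here `za` denotes the quantile z_{α/2}. -/
noncomputable def CRa (n : ℕ) (σ lam za θ ν : ℝ) : ℝ :=
  if θ < |ν - za * sigTilde lam σ θ / Real.sqrt n| then
    (Ps n σ θ ν - 2 * Phi (-(za * sigTilde lam σ θ / σ))) *
      (if ν < za * sigTilde lam σ θ / Real.sqrt n then 1 else 0)
  else if θ ≤ ν + za * sigTilde lam σ θ / Real.sqrt n then
    Phi (za * sigTilde lam σ θ / σ) - Phi (Real.sqrt n * (ν - θ) / σ)
  else 1 - 2 * Phi (-(za * sigTilde lam σ θ / σ))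

open Classical in
/-- The piecewise function CR_b(θ,ν); here `za` denotes the quantile z_{α/2}. -/
noncomputable def CRb (n : ℕ) (σ α za θ ν : ℝ) : ℝ :=
  if θ < |ν - za * σ / Real.sqrt n| then
    (Ps n σ θ ν - α) * (if ν < za * σ / Real.sqrt n then 1 else 0)
  else if θ ≤ ν + za * σ / Real.sqrt n then
    1 - α / 2 - Phi (Real.sqrt n * (ν - θ) / σ)
  else 1 - α

/-- CR₁(θ) = CR_a(θ, ν₀)/P_s(θ, ν₀) with ν₀ = √λ: the conditional coverage
probability of the asymptotic-based confidence interval. -/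
noncomputable def CR1 (n : ℕ) (σ lam za θ : ℝ) : ℝ :=
  CRa n σ lam za θ (Real.sqrt lam) / Ps n σ θ (Real.sqrt lam)

/-- CR(θ) = (CR_b(θ,ν₁) + CR_a(θ,ν₂) − CR_b(θ,ν₂))/P_s(θ,ν₁) with
ν₁ = z_{τ/2}σ/√n and ν₂ = √λ + z_{α/2}σ/√n: the conditional coverage probability
of the two-step confidence interval. Here `za` = z_{α/2} and `zt` = z_{τ/2}. -/
noncomputable def CRtwo (n : ℕ) (σ lam α za zt θ : ℝ) : ℝ :=
  (CRb n σ α za θ (zt * σ / Real.sqrt n)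
    + CRa n σ lam za θ (Real.sqrt lam + za * σ / Real.sqrt n)
    - CRb n σ α za θ (Real.sqrt lam + za * σ / Real.sqrt n))
  / Ps n σ θ (zt * σ / Real.sqrt n)

/-- Δ(θ) = CR(θ) − CR₁(θ). -/
noncomputable def Delta (n : ℕ) (σ lam α za zt θ : ℝ) : ℝ :=
  CRtwo n σ lam α za zt θ - CR1 n σ lam za θ

/-!
Since `σ̃` is increasing on `[0, ∞)` and `c₁ = √λ − z_{α/2} σ̃(c₁)/√n`, every `θ ∈ [0, c₁]`
satisfies `θ + z_{α/2} σ̃(θ)/√n ≤ √λ`. This makes `CR_a(θ, ν₀)`, `CR_a(θ, ν₂)` and `CR_b(θ, ν₂)` vanish,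
so `CR₁(θ) = 0` and `Δ(θ) = CR_b(θ, ν₁) / P_s(θ, ν₁)`. In both relevant branches
`CR_b(θ, ν₁) ≥ P_s(θ, ν₁) − α`, and a reflection argument for the Gaussian density gives
`P_s(θ, ν₁) ≥ 2Φ(−z_{τ/2}) = τ`; hence
`Δ(θ) ≥ 1 − α / P_s(θ, ν₁) ≥ 1 − α/τ`.
-/

lemma Phi_eq_integral (x : ℝ) : Phi x = ∫ t in Set.Iic x, gaussianPDFReal 0 1 t := by
  rw [Phi, gaussianReal_apply_eq_integral 0 one_ne_zero,
    ENNReal.toReal_ofReal (integral_nonneg fun t => gaussianPDFReal_nonneg 0 1 t)]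

lemma Phi_sub_Phi (a b : ℝ) : Phi b - Phi a = ∫ t in a..b, gaussianPDFReal 0 1 t := by
  rw [Phi_eq_integral, Phi_eq_integral]
  exact intervalIntegral.integral_Iic_sub_Iic (integrable_gaussianPDFReal 0 1).integrableOn
    (integrable_gaussianPDFReal 0 1).integrableOn

lemma Phi_nonneg (x : ℝ) : 0 ≤ Phi x := ENNReal.toReal_nonneg

lemma Phi_strictMono : StrictMono Phi := fun a b hab => by
  have hpos : 0 < ∫ t in a..b, gaussianPDFReal 0 1 t :=
    intervalIntegral.intervalIntegral_pos_of_pos (integrable_gaussianPDFReal 0 1).intervalIntegrable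
      (fun x => gaussianPDFReal_pos 0 1 x one_ne_zero) hab
  linarith [Phi_sub_Phi a b]

lemma gaussianPDFReal_zero_one_neg (x : ℝ) : gaussianPDFReal 0 1 (-x) = gaussianPDFReal 0 1 x := by
  simp [gaussianPDFReal]

lemma gaussianPDFReal_zero_one_le {x y : ℝ} (h : x ^ 2 ≤ y ^ 2) :
    gaussianPDFReal 0 1 y ≤ gaussianPDFReal 0 1 x := by
  simp only [gaussianPDFReal, sub_zero, NNReal.coe_one, mul_one]
  gcongr

lemma Phi_add_Phi_neg (x : ℝ) : Phi x + Phi (-x) = 1 := by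
  have h_neg : Phi (-x) = ∫ t in Set.Ioi x, gaussianPDFReal 0 1 t := calc
    Phi (-x) = ∫ t in Set.Iic (-x), gaussianPDFReal 0 1 (-t) := by
      simp only [Phi_eq_integral, gaussianPDFReal_zero_one_neg]
    _ = _ := by rw [integral_comp_neg_Iic, neg_neg]
  rw [Phi_eq_integral x, h_neg,
    intervalIntegral.integral_Iic_add_Ioi (integrable_gaussianPDFReal 0 1).integrableOn
      (integrable_gaussianPDFReal 0 1).integrableOn,
    integral_gaussianPDFReal_eq_one 0 one_ne_zero]

lemma Phi_zero : Phi 0 = 1 / 2 := by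
  linarith [neg_zero (G := ℝ) ▸ Phi_add_Phi_neg 0]

lemma pos_of_Phi_neg_eq_half {z p : ℝ} (hz : Phi (-z) = p / 2) (hp : p < 1) : 0 < z :=
  neg_neg_iff_pos.1 <| Phi_strictMono.lt_iff_lt.1 <| by rw [hz, Phi_zero]; linarith

lemma le_of_Phi_neg_eq_half {z z' p p' : ℝ} (hz : Phi (-z) = p / 2) (hz' : Phi (-z') = p' / 2)
    (hp : p ≤ p') : z' ≤ z :=
  neg_le_neg_iff.1 <| Phi_strictMono.le_iff_le.1 <| by rw [hz, hz']; linarith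

/-- Reflecting `[-v - z, -z]` about `-z` lands on `[-z, v - z]`, where every point is at least as
close to `0` (as `z ≥ 0`), so it carries at least as much Gaussian mass. -/
lemma two_mul_Phi_neg_le {v z : ℝ} (hv : 0 ≤ v) (hz : 0 ≤ z) :
    2 * Phi (-z) ≤ Phi (v - z) + Phi (-v - z) := by
  have h_reflect : ∫ t in (-v - z)..(-z), gaussianPDFReal 0 1 t
      = ∫ t in (-z)..(v - z), gaussianPDFReal 0 1 (t + 2 * z) := by
    have h_fun : (fun t => gaussianPDFReal 0 1 (-(2 * z) - t))
        = fun t => gaussianPDFReal 0 1 (t + 2 * z) :=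
      funext fun t => by rw [show -(2 * z) - t = -(t + 2 * z) by ring, gaussianPDFReal_zero_one_neg]
    rw [← h_fun, intervalIntegral.integral_comp_sub_left (gaussianPDFReal 0 1) (-(2 * z))]
    congr 1 <;> ring
  have h_mono : ∫ t in (-z)..(v - z), gaussianPDFReal 0 1 (t + 2 * z)
      ≤ ∫ t in (-z)..(v - z), gaussianPDFReal 0 1 t :=
    intervalIntegral.integral_mono_on (by linarith)
      ((integrable_gaussianPDFReal 0 1).comp_add_right (2 * z)).intervalIntegrable
      (integrable_gaussianPDFReal 0 1).intervalIntegrable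
      fun t ht => gaussianPDFReal_zero_one_le (by nlinarith [ht.1, ht.2])
  linarith [Phi_sub_Phi (-v - z) (-z), Phi_sub_Phi (-z) (v - z)]

section sigTilde

variable {lam σ : ℝ}

lemma sigTilde_nonneg (hσ : 0 ≤ σ) (hlam : 0 ≤ lam) (θ : ℝ) : 0 ≤ sigTilde lam σ θ := by
  unfold sigTilde
  split_ifs <;> positivity

lemma sigTilde_pos (hσ : 0 < σ) (hlam : 0 ≤ lam) {θ : ℝ} (hθ : θ ≠ 0) : 0 < sigTilde lam σ θ := by
  rw [sigTilde, if_neg hθ]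
  positivity

lemma sigTilde_monotoneOn (hσ : 0 ≤ σ) (hlam : 0 ≤ lam) :
    MonotoneOn (sigTilde lam σ) (Set.Ici 0) := by
  intro a ha b _ hab
  rcases (Set.mem_Ici.1 ha).eq_or_lt with rfl | ha_pos
  · simpa [sigTilde] using sigTilde_nonneg hσ hlam b
  have hb_pos : 0 < b := ha_pos.trans_le hab
  rw [sigTilde, sigTilde, if_neg ha_pos.ne', if_neg hb_pos.ne']
  gcongr

lemma add_sigTilde_le_of_le_root (hσ : 0 ≤ σ) (hlam : 0 ≤ lam) {n : ℕ} {za b c₁ θ : ℝ}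
    (hza : 0 ≤ za) (hc₁ : c₁ = b - za * sigTilde lam σ c₁ / √n) (hθ0 : 0 ≤ θ) (hθ : θ ≤ c₁) :
    θ + za * sigTilde lam σ θ / √n ≤ b := by
  have h_mono : sigTilde lam σ θ ≤ sigTilde lam σ c₁ :=
    sigTilde_monotoneOn hσ hlam hθ0 (Set.mem_Ici.2 (hθ0.trans hθ)) hθ
  have : za * sigTilde lam σ θ / √n ≤ za * sigTilde lam σ c₁ / √n := by gcongr
  linarith

lemma lt_of_add_sigTilde_le (hσ : 0 < σ) (hlam : 0 ≤ lam) {n : ℕ} (hn : 0 < n) {za b θ : ℝ}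
    (hza : 0 < za) (hb : 0 < b) (hθ0 : 0 ≤ θ) (h : θ + za * sigTilde lam σ θ / √n ≤ b) : θ < b := by
  rcases hθ0.eq_or_lt with rfl | hθ_pos
  · exact hb
  · have := sigTilde_pos hσ hlam hθ_pos.ne'
    have : 0 < za * sigTilde lam σ θ / √n := by positivity
    linarith

end sigTilde

section coverage

variable {n : ℕ} {σ : ℝ}

lemma two_mul_Phi_neg_le_Ps (hn : 0 < n) (hσ : 0 < σ) {θ z : ℝ} (hθ : 0 ≤ θ) (hz : 0 ≤ z) :
    2 * Phi (-z) ≤ Ps n σ θ (z * σ / √n) := by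
  have hsn : 0 < √(n : ℝ) := Real.sqrt_pos.2 (by exact_mod_cast hn)
  have h₁ : √n * (θ - z * σ / √n) / σ = √n * θ / σ - z := by field_simp
  have h₂ : √n * (-θ - z * σ / √n) / σ = -(√n * θ / σ) - z := by field_simp
  rw [Ps, h₁, h₂]
  exact two_mul_Phi_neg_le (by positivity) hz

lemma CRa_eq_zero (hn : 0 < n) (hσ : 0 < σ) {lam za θ ν : ℝ}
    (hc : 0 ≤ za * sigTilde lam σ θ / √n) (hθ0 : 0 ≤ θ) (hθ : θ ≤ ν - za * sigTilde lam σ θ / √n) :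
    CRa n σ lam za θ ν = 0 := by
  have hsn : 0 < √(n : ℝ) := Real.sqrt_pos.2 (by exact_mod_cast hn)
  have h_ind : ¬ ν < za * sigTilde lam σ θ / √n := by linarith
  rw [CRa, abs_of_nonneg (by linarith), if_neg h_ind, mul_zero]
  split_ifs with h_lt h_le
  · rfl
  · have h_eq : √n * (ν - θ) / σ = za * sigTilde lam σ θ / σ := by
      rw [show ν - θ = za * sigTilde lam σ θ / √n by linarith]
      field_simp
    rw [h_eq, sub_self]
  · exact absurd (by linarith) h_le

lemma CRb_eq_zero {α za θ ν : ℝ} (hθ0 : 0 ≤ θ) (hθ : θ < ν - za * σ / √n) :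
    CRb n σ α za θ ν = 0 := by
  rw [CRb, if_pos (by rw [abs_of_pos (by linarith)]; exact hθ), if_neg (by linarith), mul_zero]

lemma Ps_sub_le_CRb (hn : 0 < n) (hσ : 0 < σ) {α za θ ν : ℝ} (hza : Phi (-za) = α / 2)
    (hν : ν ≤ za * σ / √n) (hθ0 : 0 ≤ θ) (hθ : θ ≤ ν + za * σ / √n) :
    Ps n σ θ ν - α ≤ CRb n σ α za θ ν := by
  have hsn : 0 < √(n : ℝ) := Real.sqrt_pos.2 (by exact_mod_cast hn)
  rw [CRb, abs_of_nonpos (sub_nonpos.2 hν), neg_sub]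
  split_ifs with h_lt h_ν
  · rw [mul_one]
  · exact absurd (by linarith) h_ν
  · have h_tail : Phi (√n * (-θ - ν) / σ) ≤ α / 2 := by
      rw [← hza]
      refine Phi_strictMono.monotone ?_
      rw [div_le_iff₀ hσ]
      have : za * σ ≤ √n * (θ + ν) := by
        rw [← div_le_iff₀' hsn]
        linarith
      linarith
    have h_symm := Phi_add_Phi_neg (√n * (θ - ν) / σ)
    rw [show -(√n * (θ - ν) / σ) = √n * (ν - θ) / σ by ring] at h_symm
    rw [Ps]
    linarith

lemma Delta_eq_CRb_div_Ps (hn : 0 < n) (hσ : 0 < σ) {lam α za zt θ : ℝ}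
    (hc : 0 ≤ za * sigTilde lam σ θ / √n) (hzaσ : 0 ≤ za * σ / √n) (hθ0 : 0 ≤ θ)
    (hθ_add : θ + za * sigTilde lam σ θ / √n ≤ √lam) (hθ_lt : θ < √lam) :
    Delta n σ lam α za zt θ = CRb n σ α za θ (zt * σ / √n) / Ps n σ θ (zt * σ / √n) := by
  rw [Delta, CRtwo, CR1, CRa_eq_zero (ν := √lam) hn hσ hc hθ0 (by linarith),
    CRa_eq_zero (ν := √lam + za * σ / √n) hn hσ hc hθ0 (by linarith),
    CRb_eq_zero (ν := √lam + za * σ / √n) hθ0 (by linarith)]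
  ring

end coverage

lemma one_sub_div_le_div_of_sub_le {α τ P C : ℝ} (hα : 0 ≤ α) (hτ : 0 < τ) (hτP : τ ≤ P)
    (h : P - α ≤ C) : 1 - α / τ ≤ C / P := by
  have hP : 0 < P := hτ.trans_le hτP
  calc 1 - α / τ ≤ 1 - α / P := by gcongr
    _ = (P - α) / P := by rw [sub_div, div_self hP.ne']
    _ ≤ C / P := by gcongr

theorem theorem1_part_a_general (n : ℕ) (hn : 1 ≤ n) (σ lam α τ za zt : ℝ)
    (hσ : 0 < σ) (hlam : 0 < lam)
    (hτ : τ ∈ Set.Ioo (0:ℝ) 1)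
    (hza : Phi (-za) = α / 2) (hzt : Phi (-zt) = τ / 2)
    (hC1 : α ≤ τ)
    (hlamUB : Real.sqrt lam < (za + zt) * σ / Real.sqrt n)
    (c₁ : ℝ)
    (hc₁ : c₁ = Real.sqrt lam - za * sigTilde lam σ c₁ / Real.sqrt n) :
    ∀ θ ∈ Set.Icc (0:ℝ) c₁,
      1 - α / τ ≤ Delta n σ lam α za zt θ ∧
      (α < τ → 0 < Delta n σ lam α za zt θ) := by
  rintro θ ⟨hθ0, hθc₁⟩
  have hzt_pos : 0 < zt := pos_of_Phi_neg_eq_half hzt hτ.2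
  have hzt_le : zt ≤ za := le_of_Phi_neg_eq_half hza hzt hC1
  have hza_pos : 0 < za := hzt_pos.trans_le hzt_le
  have hc : 0 ≤ za * sigTilde lam σ θ / √n := by
    have := sigTilde_nonneg hσ.le hlam.le θ; positivity
  have hθ_add := add_sigTilde_le_of_le_root hσ.le hlam.le hza_pos.le hc₁ hθ0 hθc₁
  have hθ_lt := lt_of_add_sigTilde_le hσ hlam.le hn hza_pos (Real.sqrt_pos.2 hlam) hθ0 hθ_add
  have hPs : τ ≤ Ps n σ θ (zt * σ / √n) := by
    linarith [two_mul_Phi_neg_le_Ps hn hσ hθ0 hzt_pos.le]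
  have hCRb : Ps n σ θ (zt * σ / √n) - α ≤ CRb n σ α za θ (zt * σ / √n) :=
    Ps_sub_le_CRb hn hσ hza (by gcongr) hθ0
      (by rw [add_mul, add_div] at hlamUB; linarith)
  have hbound : 1 - α / τ ≤ Delta n σ lam α za zt θ := by
    rw [Delta_eq_CRb_div_Ps hn hσ hc (by positivity) hθ0 hθ_add hθ_lt]
    exact one_sub_div_le_div_of_sub_le (by linarith [Phi_nonneg (-za)]) hτ.1 hPs hCRb
  refine ⟨hbound, fun hατ => hbound.trans_lt' ?_⟩
  linarith [(div_lt_one hτ.1).2 hατ]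

/-- Theorem 1, part (a): under (C1) τ ≥ α, (C2) τ < 2Φ(−z_{α/2}/2) − α
and z_{α/2}σ/√n < √λ < (z_{α/2} + z_{τ/2})σ/√n, for every θ ∈ [0, c₁] we have
Δ(θ) ≥ 1 − α/τ; in particular Δ(θ) > 0 whenever τ > α. -/
theorem theorem1_part_a (n : ℕ) (hn : 1 ≤ n) (σ lam α τ za zt : ℝ)
    (hσ : 0 < σ) (hlam : 0 < lam)
    (hα : α ∈ Set.Ioo (0:ℝ) 1) (hτ : τ ∈ Set.Ioo (0:ℝ) 1)
    (hza : Phi (-za) = α / 2) (hzt : Phi (-zt) = τ / 2)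
    (hC1 : α ≤ τ) (hC2 : τ < 2 * Phi (-(za / 2)) - α)
    (hlamLB : za * σ / Real.sqrt n < Real.sqrt lam)
    (hlamUB : Real.sqrt lam < (za + zt) * σ / Real.sqrt n)
    (c₁ : ℝ) (hc₁pos : 0 < c₁)
    (hc₁ : c₁ = Real.sqrt lam - za * sigTilde lam σ c₁ / Real.sqrt n) :
    ∀ θ ∈ Set.Icc (0:ℝ) c₁,
      1 - α / τ ≤ Delta n σ lam α za zt θ ∧
      (α < τ → 0 < Delta n σ lam α za zt θ) :=
  theorem1_part_a_general n hn σ lam α τ za zt hσ hlam hτ hza hzt hC1 hlamUB c₁ hc₁
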